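/- With the optimal discriminator D*(x) = p_r(x)/(p_r(x)+p_g(x)) plugged in, the value of the GAN objective equals −log 4 + 2·JSD(p_r ‖ p_g), where JSD is the Jensen–Shannon divergence; in particular the minimax value −log 4 is achieved exactly when p_g = p_r (the Nash equilibrium). -/
import Mathlib


open MeasureTheory

lemma kl_aux {a b : ℝ} (ha : 0 ≤ a) (hb : 0 ≤ b) (hb0 : b = 0 → a = 0) :
    a - b ≤ a * Real.log (a / b) := by
  rcases eq_or_lt_of_le hb with hb' | hb'
  · simp [hb0 hb'.symm, ← hb']
  rcases eq_or_lt_of_le ha with ha' | ha'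
  · simp [← ha']; linarith
  · have h := Real.log_le_sub_one_of_pos (x := b / a) (by positivity)
    have e1 : Real.log (a / b) = Real.log a - Real.log b :=
      Real.log_div ha'.ne' hb'.ne'
    have e2 : Real.log (b / a) = Real.log b - Real.log a :=
      Real.log_div hb'.ne' ha'.ne'
    rw [e2] at h
    rw [e1]
    have h2 := mul_le_mul_of_nonneg_left h ha'.le
    have hba : a * (b / a - 1) = b - a := by field_simp
    nlinarith

lemma kl_aux_strict {a b : ℝ} (ha : 0 ≤ a) (hb : 0 ≤ b) (hb0 : b = 0 → a = 0)
    (hne : a ≠ b) : a - b < a * Real.log (a / b) := by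
  rcases eq_or_lt_of_le hb with hb' | hb'
  · exact absurd ((hb0 hb'.symm).trans hb') hne
  rcases eq_or_lt_of_le ha with ha' | ha'
  · simp [← ha']; linarith
  · have h := Real.log_lt_sub_one_of_pos (x := b / a) (by positivity)
      (by intro hba; apply hne; field_simp at hba; linarith)
    have e1 : Real.log (a / b) = Real.log a - Real.log b :=
      Real.log_div ha'.ne' hb'.ne'
    have e2 : Real.log (b / a) = Real.log b - Real.log a :=
      Real.log_div hb'.ne' ha'.ne'
    rw [e2] at h
    rw [e1]
    have h2 := mul_lt_mul_of_pos_left h ha'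
    have hba : a * (b / a - 1) = b - a := by field_simp
    nlinarith

/-- With the optimal discriminator `D*(x) = p_r(x)/(p_r(x)+p_g(x))` plugged in, the GAN
objective `E_{p_r}[log D*] + E_{p_g}[log(1−D*)]` equals `−log 4 + 2·JSD(p_r‖p_g)`,
where `JSD(p‖q) = ½ KL(p‖m) + ½ KL(q‖m)` with `m = (p+q)/2`; and this value equals the
minimax value `−log 4` exactly when `p_g = p_r` (almost everywhere). -/
theorem gan_value_jsd {n : ℕ} (pr pg : (Fin n → ℝ) → ℝ)
    (hpr : ∀ x, 0 ≤ pr x) (hpg : ∀ x, 0 ≤ pg x)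
    (hprm : Measurable pr) (hpgm : Measurable pg)
    (hpr1 : ∫ x, pr x = 1) (hpg1 : ∫ x, pg x = 1)
    (h1 : Integrable (fun x => pr x * Real.log (pr x / ((pr x + pg x) / 2))))
    (h2 : Integrable (fun x => pg x * Real.log (pg x / ((pr x + pg x) / 2)))) :
    ((∫ x, pr x * Real.log (pr x / (pr x + pg x))) +
        ∫ x, pg x * Real.log (pg x / (pr x + pg x))) =
      -Real.log 4 +
        2 * ((1 / 2) * (∫ x, pr x * Real.log (pr x / ((pr x + pg x) / 2))) +
             (1 / 2) * (∫ x, pg x * Real.log (pg x / ((pr x + pg x) / 2)))) ∧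
    (((∫ x, pr x * Real.log (pr x / (pr x + pg x))) +
        ∫ x, pg x * Real.log (pg x / (pr x + pg x))) = -Real.log 4 ↔
      pg =ᵐ[volume] pr) := by
  have hpri : Integrable pr volume := by
    by_contra h; rw [integral_undef h] at hpr1; norm_num at hpr1
  have hpgi : Integrable pg volume := by
    by_contra h; rw [integral_undef h] at hpg1; norm_num at hpg1
  have key1 : ∀ x, pr x * Real.log (pr x / (pr x + pg x)) =
      pr x * Real.log (pr x / ((pr x + pg x) / 2)) - Real.log 2 * pr x := by
    intro x
    rcases eq_or_lt_of_le (hpr x) with h0 | h0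
    · simp [← h0]
    · have hs : 0 < pr x + pg x := by linarith [hpg x]
      have he : pr x / (pr x + pg x) = (pr x / ((pr x + pg x) / 2)) / 2 := by
        field_simp
      rw [he, Real.log_div (by positivity) two_ne_zero]; ring
  have key2 : ∀ x, pg x * Real.log (pg x / (pr x + pg x)) =
      pg x * Real.log (pg x / ((pr x + pg x) / 2)) - Real.log 2 * pg x := by
    intro x
    rcases eq_or_lt_of_le (hpg x) with h0 | h0
    · simp [← h0]
    · have hs : 0 < pr x + pg x := by linarith [hpr x]
      have he : pg x / (pr x + pg x) = (pg x / ((pr x + pg x) / 2)) / 2 := by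
        field_simp
      rw [he, Real.log_div (by positivity) two_ne_zero]; ring
  have hA : (∫ x, pr x * Real.log (pr x / (pr x + pg x))) =
      (∫ x, pr x * Real.log (pr x / ((pr x + pg x) / 2))) - Real.log 2 := by
    simp_rw [key1]
    rw [integral_sub h1 (hpri.const_mul _), integral_const_mul, hpr1, mul_one]
  have hB : (∫ x, pg x * Real.log (pg x / (pr x + pg x))) =
      (∫ x, pg x * Real.log (pg x / ((pr x + pg x) / 2))) - Real.log 2 := by
    simp_rw [key2]
    rw [integral_sub h2 (hpgi.const_mul _), integral_const_mul, hpg1, mul_one]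
  have hlog4 : Real.log 4 = 2 * Real.log 2 := by
    rw [show (4 : ℝ) = 2 ^ 2 by norm_num, Real.log_pow]; push_cast; ring
  refine ⟨by rw [hA, hB, hlog4]; ring, ?_⟩
  rw [hA, hB, hlog4]
  set A := ∫ x, pr x * Real.log (pr x / ((pr x + pg x) / 2)) with hAdef
  set B := ∫ x, pg x * Real.log (pg x / ((pr x + pg x) / 2)) with hBdef
  have hred : (A - Real.log 2 + (B - Real.log 2) = -(2 * Real.log 2)) ↔
      A + B = 0 := by constructor <;> intro h <;> linarith
  rw [hred]
  -- pointwise nonnegativity facts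
  have hm0 : ∀ x : Fin n → ℝ, (pr x + pg x) / 2 = 0 → pr x = 0 ∧ pg x = 0 := by
    intro x hx
    constructor <;> nlinarith [hpr x, hpg x]
  have hd1 : ∀ x, pr x - (pr x + pg x) / 2 ≤
      pr x * Real.log (pr x / ((pr x + pg x) / 2)) := fun x =>
    kl_aux (hpr x) (by linarith [hpr x, hpg x]) (fun h => (hm0 x h).1)
  have hd2 : ∀ x, pg x - (pr x + pg x) / 2 ≤
      pg x * Real.log (pg x / ((pr x + pg x) / 2)) := fun x =>
    kl_aux (hpg x) (by linarith [hpr x, hpg x]) (fun h => (hm0 x h).2)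
  have hsumnn : ∀ x, 0 ≤ pr x * Real.log (pr x / ((pr x + pg x) / 2)) +
      pg x * Real.log (pg x / ((pr x + pg x) / 2)) := by
    intro x
    have := hd1 x
    have := hd2 x
    linarith
  constructor
  · intro hAB
    have hint : Integrable (fun x => pr x * Real.log (pr x / ((pr x + pg x) / 2)) +
        pg x * Real.log (pg x / ((pr x + pg x) / 2))) volume := h1.add h2
    have hI : (∫ x, (pr x * Real.log (pr x / ((pr x + pg x) / 2)) +
        pg x * Real.log (pg x / ((pr x + pg x) / 2)))) = 0 := by
      rw [integral_add h1 h2, ← hAdef, ← hBdef, hAB]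
    have hzero := (integral_eq_zero_iff_of_nonneg (fun x => hsumnn x) hint).mp hI
    filter_upwards [hzero] with x hx
    simp only [Pi.zero_apply] at hx
    by_contra hne
    have hne' : pr x ≠ (pr x + pg x) / 2 := by
      intro h; apply hne; nlinarith [h]
    have hs1 := kl_aux_strict (hpr x) (by linarith [hpr x, hpg x])
      (fun h => (hm0 x h).1) hne'
    have := hd2 x
    linarith
  · intro hae
    have hAz : A = 0 := by
      rw [hAdef]
      rw [show (0 : ℝ) = ∫ (_ : Fin n → ℝ), (0 : ℝ) by simp]
      apply integral_congr_ae
      filter_upwards [hae] with x hx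
      rcases eq_or_lt_of_le (hpr x) with h0 | h0
      · simp [← h0]
      · rw [hx]
        have : pr x / ((pr x + pr x) / 2) = 1 := by
          rw [div_eq_one_iff_eq (by positivity)]; ring
        rw [this, Real.log_one, mul_zero]
    have hBz : B = 0 := by
      rw [hBdef]
      rw [show (0 : ℝ) = ∫ (_ : Fin n → ℝ), (0 : ℝ) by simp]
      apply integral_congr_ae
      filter_upwards [hae] with x hx
      rcases eq_or_lt_of_le (hpg x) with h0 | h0
      · simp [← h0]
      · rw [hx]
        have : pr x / ((pr x + pr x) / 2) = 1 := by
          have h0' : 0 < pr x := h0.trans_le hx.le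
          rw [div_eq_one_iff_eq (by positivity)]; ring
        rw [this, Real.log_one, mul_zero]
    rw [hAz, hBz]; ring
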